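/- arXiv:1703.03321 — 2 statements merged into one kernel-verified Lean document; each statement's English description precedes it below -/
import Mathlib

section
/- Let U ⊆ ℝ^m be open, ψ : U → ℝ be C², and F(A) = ψ(P₁(A), …, P_m(A)) on Ω = {A : (P₁(A),…,P_m(A)) ∈ U}. Then for every A ∈ Ω and all n×n real matrices W and η, d²F(A)(WA − AW, η) = dF(A)(ηW − Wη). -/
attribute [local instance] Matrix.normedAddCommGroup Matrix.normedSpace

/-- `P_k(A) = trace (A ^ k)`, bundled as the vector `(P₁(A), …, P_m(A))`. -/
noncomputable def Pvec (n m : ℕ) (A : Matrix (Fin n) (Fin n) ℝ) : Fin m → ℝ :=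
  fun l => (A ^ ((l : ℕ) + 1)).trace

/-!
`F` is invariant under conjugation, so infinitesimally `dF(X)[W, X] = 0` on `Ω`: indeed
`ad W = [W, ·]` is a derivation, hence `d(X ↦ X ^ k)(X)[W, X] = [W, X ^ k]`, which is
traceless. Differentiating `X ↦ dF(X)[W, X] = 0` once more at `A` in the direction `η` gives
`d²F(A)(η, [W, A]) + dF(A)[W, η] = 0`, and `d²F(A)` is symmetric because `F` is `C²`.
-/

open Filter Topology

section SecondDerivative

variable {E G : Type*} [NormedAddCommGroup E] [NormedSpace ℝ E]
  [NormedAddCommGroup G] [NormedSpace ℝ G]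

theorem fderiv_fderiv_apply_eq_neg_of_eventually_fderiv_apply_eq_zero {f : E → G} {x : E}
    (hf : ContDiffAt ℝ 2 f x) (T : E →L[ℝ] E) (h : ∀ᶠ y in 𝓝 x, fderiv ℝ f y (T y) = 0)
    (v : E) : fderiv ℝ (fderiv ℝ f) x (T x) v = -fderiv ℝ f x (T v) := by
  have hdiff : DifferentiableAt ℝ (fderiv ℝ f) x :=
    (hf.fderiv_right (m := 1) le_rfl).differentiableAt one_ne_zero
  have hderiv := hdiff.hasFDerivAt.clm_apply T.hasFDerivAt
  have hzero : HasFDerivAt (fun y => fderiv ℝ f y (T y)) (0 : E →L[ℝ] G) x :=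
    (hasFDerivAt_const (0 : G) x).congr_of_eventuallyEq h
  have hsum := congrArg (· v) (hderiv.unique hzero)
  simp only [add_apply, ContinuousLinearMap.comp_apply, ContinuousLinearMap.flip_apply,
    zero_apply] at hsum
  rw [hf.isSymmSndFDerivAt (by simp)]
  exact eq_neg_of_add_eq_zero_right hsum

end SecondDerivative

namespace Matrix

variable {𝕜 : Type*} [NontriviallyNormedField 𝕜] [CompleteSpace 𝕜]
  {ι : Type*} [Fintype ι] [DecidableEq ι]

noncomputable def mulCLM : Matrix ι ι 𝕜 →L[𝕜] Matrix ι ι 𝕜 →L[𝕜] Matrix ι ι 𝕜 :=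
  (LinearMap.mul 𝕜 (Matrix ι ι 𝕜)).toContinuousBilinearMap

noncomputable def traceCLM : Matrix ι ι 𝕜 →L[𝕜] 𝕜 :=
  LinearMap.toContinuousLinearMap (traceLinearMap ι 𝕜 𝕜)

theorem contDiff_pow {N : WithTop ℕ∞} (k : ℕ) :
    ContDiff 𝕜 N fun X : Matrix ι ι 𝕜 => X ^ k := by
  induction k with
  | zero => simpa using contDiff_const
  | succ k ih =>
    simp_rw [pow_succ]
    exact (mulCLM (𝕜 := 𝕜)).isBoundedBilinearMap.contDiff.comp (ih.prodMk contDiff_id)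

theorem contDiff_trace_pow {N : WithTop ℕ∞} (k : ℕ) :
    ContDiff 𝕜 N fun X : Matrix ι ι 𝕜 => (X ^ k).trace :=
  (traceCLM (𝕜 := 𝕜)).contDiff.comp (contDiff_pow k)

theorem fderiv_mul_apply {E : Type*} [NormedAddCommGroup E] [NormedSpace 𝕜 E]
    {f g : E → Matrix ι ι 𝕜} {x : E} (hf : DifferentiableAt 𝕜 f x) (hg : DifferentiableAt 𝕜 g x)
    (v : E) : fderiv 𝕜 (fun y => f y * g y) x v = fderiv 𝕜 f x v * g x + f x * fderiv 𝕜 g x v :=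
  (congrArg (· v) ((mulCLM (𝕜 := 𝕜) (ι := ι)).fderiv_of_bilinear hf hg)).trans (add_comm _ _)

-- `erw`: derivatives stated here are applied through the product topology of `Matrix`, those
-- produced by the calculus lemmas through the (defeq) topology of its sup norm.
theorem fderiv_pow_apply_lie (k : ℕ) (X W : Matrix ι ι 𝕜) :
    fderiv 𝕜 (fun Y : Matrix ι ι 𝕜 => Y ^ k) X ⁅W, X⁆ = ⁅W, X ^ k⁆ := by
  induction k with
  | zero => simp [Ring.lie_def]
  | succ k ih =>
    simp_rw [pow_succ]
    refine (fderiv_mul_apply ((contDiff_pow (N := 1) k).differentiable one_ne_zero X)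
      differentiableAt_fun_id _).trans ?_
    erw [ih, fderiv_fun_id, ContinuousLinearMap.id_apply]
    simp only [Ring.lie_def]
    noncomm_ring

theorem fderiv_trace_pow_apply_lie (k : ℕ) (X W : Matrix ι ι 𝕜) :
    fderiv 𝕜 (fun Y : Matrix ι ι 𝕜 => (Y ^ k).trace) X ⁅W, X⁆ = 0 := by
  have hpow := ((contDiff_pow (𝕜 := 𝕜) (ι := ι) (N := 1) k).differentiable
    one_ne_zero X).hasFDerivAt
  calc fderiv 𝕜 (fun Y : Matrix ι ι 𝕜 => (Y ^ k).trace) X ⁅W, X⁆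
      = traceCLM (fderiv 𝕜 (fun Y : Matrix ι ι 𝕜 => Y ^ k) X ⁅W, X⁆) :=
        congrArg (· ⁅W, X⁆) (traceCLM.hasFDerivAt.comp X hpow).fderiv
    _ = (⁅W, X ^ k⁆ : Matrix ι ι 𝕜).trace := by erw [fderiv_pow_apply_lie]; rfl
    _ = 0 := LieAlgebra.matrix_trace_commutator_zero _ _ _ _

end Matrix

section Pvec

variable {n m : ℕ}

theorem contDiff_Pvec {N : WithTop ℕ∞} : ContDiff ℝ N (Pvec n m) :=
  contDiff_pi.2 fun _ => Matrix.contDiff_trace_pow _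

theorem fderiv_Pvec_apply_lie (X W : Matrix (Fin n) (Fin n) ℝ) :
    fderiv ℝ (Pvec n m) X ⁅W, X⁆ = 0 := by
  unfold Pvec
  erw [fderiv_pi (φ := fun (l : Fin m) (Y : Matrix (Fin n) (Fin n) ℝ) => (Y ^ ((l : ℕ) + 1)).trace)
    fun _ => (Matrix.contDiff_trace_pow (N := 1) _).differentiable one_ne_zero X]
  funext l
  exact Matrix.fderiv_trace_pow_apply_lie _ X W

theorem fderiv_comp_Pvec_apply_lie {ψ : (Fin m → ℝ) → ℝ} {X : Matrix (Fin n) (Fin n) ℝ}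
    (hψ : DifferentiableAt ℝ ψ (Pvec n m X)) (W : Matrix (Fin n) (Fin n) ℝ) :
    fderiv ℝ (fun Y => ψ (Pvec n m Y)) X ⁅W, X⁆ = 0 := by
  have hchain := fderiv_comp (𝕜 := ℝ) X hψ (contDiff_Pvec.differentiable one_ne_zero X)
  calc fderiv ℝ (fun Y => ψ (Pvec n m Y)) X ⁅W, X⁆
      = fderiv ℝ ψ (Pvec n m X) (fderiv ℝ (Pvec n m) X ⁅W, X⁆) := congrArg (· ⁅W, X⁆) hchain
    _ = 0 := by erw [fderiv_Pvec_apply_lie, map_zero]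

end Pvec

/-- For `ψ` of class `C²` on the open `U ⊆ ℝ^m` and the associated
operator function `F(A) = ψ(P₁(A),…,P_m(A))` on `Ω = {A | Pvec A ∈ U}`, for every
`A ∈ Ω` and all matrices `W`, `η`:
`d²F(A)(WA - AW, η) = dF(A)(ηW - Wη)`. -/
theorem stmt_10 (n m : ℕ) (U : Set (Fin m → ℝ)) (hU : IsOpen U)
    (ψ : (Fin m → ℝ) → ℝ) (hψ : ContDiffOn ℝ 2 ψ U)
    (A : Matrix (Fin n) (Fin n) ℝ) (hA : Pvec n m A ∈ U) :
    ∀ W η : Matrix (Fin n) (Fin n) ℝ,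
      fderiv ℝ (fderiv ℝ (fun X : Matrix (Fin n) (Fin n) ℝ => ψ (Pvec n m X))) A
          (W * A - A * W) η
        = fderiv ℝ (fun X : Matrix (Fin n) (Fin n) ℝ => ψ (Pvec n m X)) A
            (η * W - W * η) := by
  intro W η
  have hF : ContDiffAt ℝ 2 (fun X => ψ (Pvec n m X)) A :=
    (hψ.contDiffAt (hU.mem_nhds hA)).comp A contDiff_Pvec.contDiffAt
  let adW : Matrix (Fin n) (Fin n) ℝ →L[ℝ] Matrix (Fin n) (Fin n) ℝ :=
    LinearMap.toContinuousLinearMap (LinearMap.mulLeft ℝ W - LinearMap.mulRight ℝ W)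
  have hinv : ∀ᶠ X in 𝓝 A, fderiv ℝ (fun Y => ψ (Pvec n m Y)) X (adW X) = 0 := by
    filter_upwards [(contDiff_Pvec (N := 0)).continuous.continuousAt.preimage_mem_nhds
      (hU.mem_nhds hA)] with X hX
    rw [show adW X = ⁅W, X⁆ from (Ring.lie_def W X).symm]
    exact fderiv_comp_Pvec_apply_lie
      ((hψ.differentiableOn (by norm_num)).differentiableAt (hU.mem_nhds hX)) W
  refine (fderiv_fderiv_apply_eq_neg_of_eventually_fderiv_apply_eq_zero hF adW hinv η).trans ?_
  rw [← map_neg]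
  exact congrArg _ (neg_sub _ _)
end

section
/- Let Γ₊ = {κ ∈ ℝⁿ : κᵢ > 0 ∀i}, U ⊆ ℝ^m open with (p₁(κ),…,p_m(κ)) ∈ U for all κ ∈ Γ₊, ψ : U → ℝ be C¹, and suppose f(κ) = ψ(p₁(κ),…,p_m(κ)) is positive, strictly monotone (∂f/∂κᵢ > 0 on Γ₊ for all i), and homogeneous of degree one (f(λκ) = λf(κ) for all λ > 0, κ ∈ Γ₊). Let A be an n×n real matrix, diagonalisable with eigenvalues κ ∈ Γ₊ (so A is invertible), let g be symmetric positive definite with gA = Aᵀg, and set F(A) = ψ(P₁(A),…,P_m(A)), F'(A) = Σ_{l=1}^m l·∂_lψ(P₁(A),…,P_m(A))·A^{l−1}. Then for every n×n real matrix η, trace(F'(A) · (g⁻¹ηᵀg) · A⁻¹ · η) ≥ F(A)⁻¹ · (trace(F'(A)·η))². -/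
open Matrix

attribute [local instance] Matrix.normedAddCommGroup Matrix.normedSpace

/-- `p_k(κ) = ∑ i, κ i ^ k`, bundled as the vector `(p₁(κ), …, p_m(κ))`. -/
def pvec (n m : ℕ) (κ : Fin n → ℝ) : Fin m → ℝ :=
  fun l => ∑ i, κ i ^ ((l : ℕ) + 1)

/-- `F'(A) = ∑_{l=1}^m l ∂ψ/∂P_l (P₁(A),…,P_m(A)) A^{l-1}`
(the index `l : Fin m` represents the integer `l + 1 ∈ {1, …, m}`). -/
noncomputable def Fprime (n m : ℕ) (ψ : (Fin m → ℝ) → ℝ) (A : Matrix (Fin n) (Fin n) ℝ) :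
    Matrix (Fin n) (Fin n) ℝ :=
  ∑ l : Fin m,
    (((l : ℕ) + 1 : ℝ) * fderiv ℝ ψ (Pvec n m A) (Pi.single l 1)) • A ^ (l : ℕ)

/-!
Because `g` is positive definite and `A` is `g`-self-adjoint, `A` has a `g`-orthonormal
eigenbasis: `A = Q D Q⁻¹` with `D = diag μ` and `Qᵀ g Q = 1`, and conjugating by `Q` turns the
`g`-adjoint into the transpose. The eigenvalues `μ` are those of `diag κ`, hence positive. By the
chain rule `F'(A) = Q diag(∂f/∂κᵢ (μ)) Q⁻¹`, so with `ζ = Q⁻¹ η Q` and `fᵢ = ∂f/∂κᵢ (μ) > 0` the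
claim reads `(∑ fᵢ ζᵢᵢ)² ≤ f(μ) ∑ᵢⱼ fᵢ ζⱼᵢ² / μⱼ`. Euler's identity `f(μ) = ∑ fᵢ μᵢ` makes this
the Cauchy–Schwarz inequality for the diagonal terms, the off-diagonal ones being nonnegative.
-/

theorem fderiv_apply_self_of_homogeneous {E : Type*} [NormedAddCommGroup E] [NormedSpace ℝ E]
    {f : E → ℝ} {x : E} (hf : DifferentiableAt ℝ f x)
    (hhom : ∀ t : ℝ, 0 < t → f (t • x) = t * f x) :
    fderiv ℝ f x x = f x := by
  have hray : HasDerivAt (fun t : ℝ => t • x) x 1 := by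
    simpa using (hasDerivAt_id (1 : ℝ)).smul_const x
  have hchain : HasDerivAt (fun t : ℝ => f (t • x)) (fderiv ℝ f x x) 1 := by
    refine HasFDerivAt.comp_hasDerivAt (f := fun t : ℝ => t • x) 1 ?_ hray
    rw [one_smul]
    exact hf.hasFDerivAt
  have hlinear : HasDerivAt (fun t : ℝ => f (t • x)) (f x) 1 :=
    (hasDerivAt_mul_const (f x)).congr_of_eventuallyEq
      ((eventually_gt_nhds one_pos).mono fun t ht => hhom t ht)
  exact hchain.unique hlinear

theorem ContinuousLinearMap.apply_eq_sum_mul_single {ι : Type*} [Fintype ι] [DecidableEq ι]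
    (L : (ι → ℝ) →L[ℝ] ℝ) (v : ι → ℝ) : L v = ∑ i, v i * L (Pi.single i 1) := by
  conv_lhs => rw [← Finset.univ_sum_single v]
  simp only [map_sum]
  refine Finset.sum_congr rfl fun i _ => ?_
  rw [← smul_eq_mul, ← map_smul, ← Pi.single_smul, smul_eq_mul, mul_one]

theorem sum_mul_fderiv_apply_single_of_homogeneous {ι : Type*} [Fintype ι] [DecidableEq ι]
    {f : (ι → ℝ) → ℝ} {x : ι → ℝ} (hf : DifferentiableAt ℝ f x)
    (hhom : ∀ t : ℝ, 0 < t → f (t • x) = t * f x) :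
    ∑ i, x i * fderiv ℝ f x (Pi.single i 1) = f x := by
  rw [← ContinuousLinearMap.apply_eq_sum_mul_single, fderiv_apply_self_of_homogeneous hf hhom]

theorem hasFDerivAt_pvec (n m : ℕ) (μ : Fin n → ℝ) :
    HasFDerivAt (pvec n m) (ContinuousLinearMap.pi fun l : Fin m =>
      ∑ i, (((l : ℕ) + 1 : ℝ) * μ i ^ (l : ℕ)) •
        (ContinuousLinearMap.proj i : (Fin n → ℝ) →L[ℝ] ℝ)) μ := by
  refine hasFDerivAt_pi.2 fun l => HasFDerivAt.fun_sum fun i _ => ?_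
  have hcoord : HasFDerivAt (fun x : Fin n → ℝ => x i)
      (ContinuousLinearMap.proj i : (Fin n → ℝ) →L[ℝ] ℝ) μ := hasFDerivAt_apply i μ
  simpa [smul_smul, Function.comp_def] using
    (hasDerivAt_pow ((l : ℕ) + 1) (μ i)).comp_hasFDerivAt μ hcoord

theorem fderiv_comp_pvec_apply_single {n m : ℕ} {ψ : (Fin m → ℝ) → ℝ} {μ : Fin n → ℝ}
    (hψ : DifferentiableAt ℝ ψ (pvec n m μ)) (i : Fin n) :
    fderiv ℝ (fun x => ψ (pvec n m x)) μ (Pi.single i 1) =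
      ∑ l : Fin m, ((l : ℕ) + 1 : ℝ) * fderiv ℝ ψ (pvec n m μ) (Pi.single l 1) * μ i ^ (l : ℕ) := by
  rw [show (fun x => ψ (pvec n m x)) = ψ ∘ pvec n m from rfl,
    (hψ.hasFDerivAt.comp μ (hasFDerivAt_pvec n m μ)).fderiv,
    ContinuousLinearMap.comp_apply, ContinuousLinearMap.apply_eq_sum_mul_single]
  refine Finset.sum_congr rfl fun l _ => ?_
  simp only [ContinuousLinearMap.coe_pi', _root_.sum_apply, _root_.smul_apply,
    ContinuousLinearMap.proj_apply, Pi.single_apply, smul_eq_mul, mul_ite, mul_one, mul_zero,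
    Finset.sum_ite_eq', Finset.mem_univ, ↓reduceIte]
  ring

theorem sq_trace_diagonal_mul_le {ι : Type*} [Fintype ι] [DecidableEq ι] {φ μ : ι → ℝ}
    (hφ : ∀ i, 0 < φ i) (hμ : ∀ i, 0 < μ i) (ζ : Matrix ι ι ℝ) :
    (diagonal φ * ζ).trace ^ 2 ≤
      (∑ i, μ i * φ i) * (diagonal φ * ζᵀ * diagonal μ⁻¹ * ζ).trace := by
  have htrace : (diagonal φ * ζᵀ * diagonal μ⁻¹ * ζ).trace =
      ∑ i, ∑ j, φ i * ζ j i ^ 2 / μ j := by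
    simp only [trace, Matrix.mul_assoc, diag_apply, mul_apply, diagonal_apply, transpose_apply,
      Pi.inv_apply, ite_mul, zero_mul, Finset.sum_ite_eq, Finset.mem_univ, ↓reduceIte,
      Finset.mul_sum, Finset.sum_ite_irrel, Finset.sum_const_zero, div_eq_mul_inv]
    exact Finset.sum_congr rfl fun i _ => Finset.sum_congr rfl fun j _ => by ring
  have hdiag : ∑ i, φ i * ζ i i ^ 2 / μ i ≤ ∑ i, ∑ j, φ i * ζ j i ^ 2 / μ j :=
    Finset.sum_le_sum fun i _ => Finset.single_le_sum (f := fun j => φ i * ζ j i ^ 2 / μ j)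
      (fun j _ => by have := hφ i; have := hμ j; positivity) (Finset.mem_univ i)
  have hcs : (∑ i, φ i * ζ i i) ^ 2 ≤ (∑ i, μ i * φ i) * ∑ i, φ i * ζ i i ^ 2 / μ i := by
    refine Finset.sum_sq_le_sum_mul_sum_of_sq_le_mul _ (fun i _ => (mul_pos (hμ i) (hφ i)).le)
      (fun i _ => by have := hφ i; have := hμ i; positivity) fun i _ => le_of_eq ?_
    field_simp [(hμ i).ne']
  rw [htrace]
  simpa [trace, diagonal_mul] using hcs.trans (mul_le_mul_of_nonneg_left hdiag
    (Finset.sum_nonneg fun i _ => (mul_pos (hμ i) (hφ i)).le))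

section Conjugation

variable {ι : Type*} [Fintype ι] [DecidableEq ι] {Q : Matrix ι ι ℝ}

theorem conj_mul_conj_of_isUnit (hQ : IsUnit Q) (X Y : Matrix ι ι ℝ) :
    Q * X * Q⁻¹ * (Q * Y * Q⁻¹) = Q * (X * Y) * Q⁻¹ := by
  simp only [mul_assoc, nonsing_inv_mul_cancel_left _ _ ((isUnit_iff_isUnit_det Q).1 hQ)]

theorem conj_pow_of_isUnit (hQ : IsUnit Q) (X : Matrix ι ι ℝ) (k : ℕ) :
    (Q * X * Q⁻¹) ^ k = Q * X ^ k * Q⁻¹ := by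
  obtain ⟨u, rfl⟩ := hQ
  rw [← coe_units_inv]
  exact Units.conj_pow u X k

theorem spectrum_conj_diagonal_of_isUnit (hQ : IsUnit Q) (μ : ι → ℝ) :
    spectrum ℝ (Q * diagonal μ * Q⁻¹) = Set.range μ := by
  obtain ⟨u, rfl⟩ := hQ
  rw [← coe_units_inv, spectrum.units_conjugate, spectrum_diagonal]

theorem spectrum_eq_range_of_inv_mul_mul_eq_diagonal {A : Matrix ι ι ℝ} (hQ : IsUnit Q)
    {κ : ι → ℝ} (h : Q⁻¹ * A * Q = diagonal κ) : spectrum ℝ A = Set.range κ := by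
  obtain ⟨u, rfl⟩ := hQ
  rw [← coe_units_inv] at h
  rw [← spectrum.units_conjugate' (u := u), h, spectrum_diagonal]

theorem trace_mul_mul_inv_mul (X η : Matrix ι ι ℝ) :
    (Q * X * Q⁻¹ * η).trace = (X * (Q⁻¹ * η * Q)).trace := by
  rw [mul_assoc, mul_assoc, trace_mul_comm]
  simp only [mul_assoc]

theorem inv_conj_diagonal_of_isUnit (hQ : IsUnit Q) {μ : ι → ℝ} (hμ : ∀ i, μ i ≠ 0) :
    (Q * diagonal μ * Q⁻¹)⁻¹ = Q * diagonal μ⁻¹ * Q⁻¹ := by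
  refine inv_eq_left_inv ?_
  rw [conj_mul_conj_of_isUnit hQ, diagonal_mul_diagonal]
  simp [inv_mul_cancel₀ (hμ _), mul_nonsing_inv _ ((isUnit_iff_isUnit_det Q).1 hQ)]

theorem inv_mul_transpose_mul_eq_conj (hQ : IsUnit Q) {g : Matrix ι ι ℝ}
    (hQg : Qᵀ * g * Q = 1) (η : Matrix ι ι ℝ) :
    g⁻¹ * ηᵀ * g = Q * (Q⁻¹ * η * Q)ᵀ * Q⁻¹ := by
  have hdet := (isUnit_iff_isUnit_det Q).1 hQ
  have hdetT : IsUnit Qᵀ.det := by rwa [det_transpose]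
  have hg : g = Qᵀ⁻¹ * Q⁻¹ := by
    calc g = Qᵀ⁻¹ * (Qᵀ * g * Q) * Q⁻¹ := by
          simp only [mul_assoc, mul_nonsing_inv _ hdet, nonsing_inv_mul_cancel_left _ _ hdetT,
            mul_one]
      _ = Qᵀ⁻¹ * Q⁻¹ := by rw [hQg, mul_one]
  have hginv : g⁻¹ = Q * Qᵀ := by
    refine inv_eq_left_inv ?_
    rw [hg, mul_assoc, ← mul_assoc Qᵀ, mul_nonsing_inv _ hdetT, one_mul, mul_nonsing_inv _ hdet]
  rw [hginv, hg]
  simp only [transpose_mul, transpose_nonsing_inv, mul_assoc]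

end Conjugation

section Diagonalization

variable {ι : Type*} [Fintype ι] [DecidableEq ι]

open scoped MatrixOrder in
theorem Matrix.PosDef.exists_isUnit_transpose_mul_self_eq {g : Matrix ι ι ℝ} (hg : g.PosDef) :
    ∃ R : Matrix ι ι ℝ, IsUnit R ∧ Rᵀ * R = g := by
  have hsqrt : (CFC.sqrt g)ᵀ = CFC.sqrt g := by
    simpa using (CFC.sqrt_nonneg g).posSemidef.isHermitian.eq
  refine ⟨CFC.sqrt g, (CFC.isUnit_sqrt_iff g hg.posSemidef.nonneg).2 hg.isUnit, ?_⟩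
  rw [hsqrt, CFC.sqrt_mul_sqrt_self g hg.posSemidef.nonneg]

theorem isSymm_conj_of_mul_eq_transpose_mul {R g A : Matrix ι ι ℝ} (hR : IsUnit R)
    (hRg : Rᵀ * R = g) (hA : g * A = Aᵀ * g) : (R * A * R⁻¹).IsSymm := by
  have hdet := (isUnit_iff_isUnit_det R).1 hR
  have hdetT : IsUnit Rᵀ.det := by rwa [det_transpose]
  calc (R * A * R⁻¹)ᵀ = Rᵀ⁻¹ * (Aᵀ * g) * R⁻¹ := by
        rw [← hRg]
        simp only [transpose_mul, transpose_nonsing_inv, mul_assoc, mul_nonsing_inv _ hdet, mul_one]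
    _ = Rᵀ⁻¹ * (g * A) * R⁻¹ := by rw [hA]
    _ = R * A * R⁻¹ := by
        rw [← hRg]
        simp only [mul_assoc, nonsing_inv_mul_cancel_left _ _ hdetT]

theorem Matrix.IsSymm.exists_orthogonal_diagonalization {B : Matrix ι ι ℝ} (hB : B.IsSymm) :
    ∃ (O : Matrix ι ι ℝ) (μ : ι → ℝ), Oᵀ * O = 1 ∧ B = O * diagonal μ * Oᵀ := by
  have hB' : B.IsHermitian := isHermitian_iff_isSymm.2 hB
  refine ⟨hB'.eigenvectorUnitary, hB'.eigenvalues, ?_, ?_⟩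
  · simpa [star_eq_conjTranspose] using (mem_unitaryGroup_iff').1 hB'.eigenvectorUnitary.2
  · simpa [Unitary.conjStarAlgAut_apply, star_eq_conjTranspose] using hB'.spectral_theorem

theorem exists_diagonalization_of_mul_eq_transpose_mul {g A : Matrix ι ι ℝ} (hg : g.PosDef)
    (hA : g * A = Aᵀ * g) :
    ∃ (Q : Matrix ι ι ℝ) (μ : ι → ℝ), IsUnit Q ∧ Qᵀ * g * Q = 1 ∧ A = Q * diagonal μ * Q⁻¹ := by
  obtain ⟨R, hR, hRg⟩ := hg.exists_isUnit_transpose_mul_self_eq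
  obtain ⟨O, μ, hOO, hspec⟩ :=
    (isSymm_conj_of_mul_eq_transpose_mul hR hRg hA).exists_orthogonal_diagonalization
  have hdet := (isUnit_iff_isUnit_det R).1 hR
  have hdetT : IsUnit Rᵀ.det := by rwa [det_transpose]
  have hleft : Oᵀ * R * (R⁻¹ * O) = 1 := by
    rw [mul_assoc, mul_nonsing_inv_cancel_left _ _ hdet, hOO]
  refine ⟨R⁻¹ * O, μ, (isUnit_iff_isUnit_det _).2 (isUnit_det_of_left_inverse hleft), ?_, ?_⟩
  · rw [← hRg, transpose_mul, transpose_nonsing_inv]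
    simp only [mul_assoc, nonsing_inv_mul_cancel_left _ _ hdetT,
      mul_nonsing_inv_cancel_left _ _ hdet, hOO]
  · calc A = R⁻¹ * (R * A * R⁻¹) * R := by
          simp only [mul_assoc, nonsing_inv_mul_cancel_left _ _ hdet, nonsing_inv_mul _ hdet,
            mul_one]
      _ = _ := by rw [hspec, inv_eq_left_inv hleft]; simp only [mul_assoc]

end Diagonalization

section PowerSums

variable {n m : ℕ}

theorem Pvec_conj_of_isUnit {Q : Matrix (Fin n) (Fin n) ℝ} (hQ : IsUnit Q)
    (A : Matrix (Fin n) (Fin n) ℝ) : Pvec n m (Q * A * Q⁻¹) = Pvec n m A := by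
  funext l
  simp only [Pvec, conj_pow_of_isUnit hQ, trace_conj hQ]

theorem Pvec_diagonal (μ : Fin n → ℝ) : Pvec n m (diagonal μ) = pvec n m μ := by
  funext l
  simp [Pvec, pvec, diagonal_pow, trace_diagonal]

theorem Fprime_conj_of_isUnit (ψ : (Fin m → ℝ) → ℝ) {Q : Matrix (Fin n) (Fin n) ℝ} (hQ : IsUnit Q)
    (A : Matrix (Fin n) (Fin n) ℝ) : Fprime n m ψ (Q * A * Q⁻¹) = Q * Fprime n m ψ A * Q⁻¹ := by
  simp only [Fprime, Pvec_conj_of_isUnit hQ, conj_pow_of_isUnit hQ, Finset.mul_sum,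
    Finset.sum_mul, mul_smul_comm, smul_mul_assoc]

theorem Fprime_diagonal {ψ : (Fin m → ℝ) → ℝ} {μ : Fin n → ℝ}
    (hψ : DifferentiableAt ℝ ψ (pvec n m μ)) :
    Fprime n m ψ (diagonal μ) =
      diagonal fun i => fderiv ℝ (fun x => ψ (pvec n m x)) μ (Pi.single i 1) := by
  ext i j
  rcases eq_or_ne i j with rfl | hij
  · simp [Fprime, Pvec_diagonal, diagonal_pow, Matrix.sum_apply, fderiv_comp_pvec_apply_single hψ]
  · simp [Fprime, diagonal_pow, Matrix.sum_apply, hij]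

end PowerSums

theorem stmt_15_general (n m : ℕ) (U : Set (Fin m → ℝ)) (hU : IsOpen U)
    (ψ : (Fin m → ℝ) → ℝ) (hψ : ContDiffOn ℝ 1 ψ U)
    (hΓU : ∀ κ : Fin n → ℝ, (∀ i, 0 < κ i) → pvec n m κ ∈ U)
    (hpos : ∀ κ : Fin n → ℝ, (∀ i, 0 < κ i) → 0 < ψ (pvec n m κ))
    (hmono : ∀ κ : Fin n → ℝ, (∀ i, 0 < κ i) → ∀ i : Fin n,
      0 < fderiv ℝ (fun x : Fin n → ℝ => ψ (pvec n m x)) κ (Pi.single i 1))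
    (hhom : ∀ (lam : ℝ), 0 < lam → ∀ κ : Fin n → ℝ, (∀ i, 0 < κ i) →
      ψ (pvec n m (lam • κ)) = lam * ψ (pvec n m κ))
    (A : Matrix (Fin n) (Fin n) ℝ) (κ : Fin n → ℝ) (hκ : ∀ i, 0 < κ i)
    (S : Matrix (Fin n) (Fin n) ℝ) (hS : IsUnit S)
    (hdiag : S⁻¹ * A * S = Matrix.diagonal κ)
    (g : Matrix (Fin n) (Fin n) ℝ) (hg : g.PosDef)
    (hsa : g * A = Aᵀ * g) :
    ∀ η : Matrix (Fin n) (Fin n) ℝ,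
      (Fprime n m ψ A * (g⁻¹ * ηᵀ * g) * A⁻¹ * η).trace
        ≥ (ψ (Pvec n m A))⁻¹ * ((Fprime n m ψ A * η).trace) ^ 2 := by
  intro η
  obtain ⟨Q, μ, hQ, hQg, rfl⟩ := exists_diagonalization_of_mul_eq_transpose_mul hg hsa
  have hμ : ∀ i, 0 < μ i := fun i => by
    obtain ⟨j, hj⟩ : μ i ∈ Set.range κ := by
      rw [← spectrum_eq_range_of_inv_mul_mul_eq_diagonal hS hdiag,
        spectrum_conj_diagonal_of_isUnit hQ]
      exact Set.mem_range_self i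
    exact hj ▸ hκ j
  have hψμ : DifferentiableAt ℝ ψ (pvec n m μ) :=
    (hψ.differentiableOn one_ne_zero).differentiableAt (hU.mem_nhds (hΓU μ hμ))
  have hEuler := sum_mul_fderiv_apply_single_of_homogeneous (f := fun x => ψ (pvec n m x))
    (hψμ.comp μ (hasFDerivAt_pvec n m μ).differentiableAt) fun t ht => hhom t ht μ hμ
  rw [Fprime_conj_of_isUnit ψ hQ, Fprime_diagonal hψμ, inv_conj_diagonal_of_isUnit hQ
    fun i => (hμ i).ne', inv_mul_transpose_mul_eq_conj hQ hQg, Pvec_conj_of_isUnit hQ,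
    Pvec_diagonal, ← hEuler, conj_mul_conj_of_isUnit hQ, conj_mul_conj_of_isUnit hQ,
    trace_mul_mul_inv_mul, trace_mul_mul_inv_mul, ge_iff_le, inv_mul_le_iff₀ (hEuler ▸ hpos μ hμ)]
  exact sq_trace_diagonal_mul_le (hmono μ hμ) hμ _

/-- Let `Γ₊ = {κ | ∀ i, κ i > 0}`, `ψ` of class `C¹` on the open
`U ⊆ ℝ^m` with `(p₁(κ),…,p_m(κ)) ∈ U` for all `κ ∈ Γ₊`, and suppose
`f(κ) = ψ(p₁(κ),…,p_m(κ))` is positive, strictly monotone and homogeneous of degree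
one on `Γ₊`. If `A` is diagonalisable with eigenvalues `κ ∈ Γ₊` and `g`-selfadjoint
for a symmetric positive definite `g`, then for every matrix `η`,
`trace (F'(A) (g⁻¹ ηᵀ g) A⁻¹ η) ≥ F(A)⁻¹ (trace (F'(A) η))²`. -/
theorem stmt_15 (n m : ℕ) (U : Set (Fin m → ℝ)) (hU : IsOpen U)
    (ψ : (Fin m → ℝ) → ℝ) (hψ : ContDiffOn ℝ 1 ψ U)
    (hΓU : ∀ κ : Fin n → ℝ, (∀ i, 0 < κ i) → pvec n m κ ∈ U)
    (hpos : ∀ κ : Fin n → ℝ, (∀ i, 0 < κ i) → 0 < ψ (pvec n m κ))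
    (hmono : ∀ κ : Fin n → ℝ, (∀ i, 0 < κ i) → ∀ i : Fin n,
      0 < fderiv ℝ (fun x : Fin n → ℝ => ψ (pvec n m x)) κ (Pi.single i 1))
    (hhom : ∀ (lam : ℝ), 0 < lam → ∀ κ : Fin n → ℝ, (∀ i, 0 < κ i) →
      ψ (pvec n m (lam • κ)) = lam * ψ (pvec n m κ))
    (A : Matrix (Fin n) (Fin n) ℝ) (κ : Fin n → ℝ) (hκ : ∀ i, 0 < κ i)
    (S : Matrix (Fin n) (Fin n) ℝ) (hS : IsUnit S)
    (hdiag : S⁻¹ * A * S = Matrix.diagonal κ)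
    (g : Matrix (Fin n) (Fin n) ℝ) (hg : g.PosDef) (hgsym : g.IsSymm)
    (hsa : g * A = Aᵀ * g) :
    ∀ η : Matrix (Fin n) (Fin n) ℝ,
      (Fprime n m ψ A * (g⁻¹ * ηᵀ * g) * A⁻¹ * η).trace
        ≥ (ψ (Pvec n m A))⁻¹ * ((Fprime n m ψ A * η).trace) ^ 2 :=
  stmt_15_general n m U hU ψ hψ hΓU hpos hmono hhom A κ hκ S hS hdiag g hg hsa
end
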